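/- arXiv:2005.06092 — 2 statements merged into one kernel-verified Lean document; each statement's English description precedes it below -/
import Mathlib

section
/- Let σ, σ̂, ε be nonnegative reals with ε > 0 and |σ̂² - σ²| ≤ ε. Then |σ̂ - σ| ≤ √2·ε / √(σ̂² + ε). -/
/-- If `σ, σ̂ ≥ 0`, `ε > 0` and `|σ̂² - σ²| ≤ ε`, then
`|σ̂ - σ| ≤ √2 · ε / √(σ̂² + ε)`. -/
theorem sd_confidence_radius
    (σ σh ε : ℝ) (hσ : 0 ≤ σ) (hσh : 0 ≤ σh) (hε : 0 < ε)
    (hsq : |σh ^ 2 - σ ^ 2| ≤ ε) :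
    |σh - σ| ≤ Real.sqrt 2 * ε / Real.sqrt (σh ^ 2 + ε) := by
  set d := |σh - σ| with hd
  have hd0 : 0 ≤ d := abs_nonneg _
  have hpos : 0 < σh ^ 2 + ε := by positivity
  have hs : 0 < Real.sqrt (σh ^ 2 + ε) := Real.sqrt_pos.mpr hpos
  have hs2 : Real.sqrt (σh ^ 2 + ε) ^ 2 = σh ^ 2 + ε := Real.sq_sqrt hpos.le
  have h1 : d * (σh + σ) ≤ ε := by
    have he : d * (σh + σ) = |σh ^ 2 - σ ^ 2| := by
      rw [hd, ← abs_of_nonneg (by linarith : (0:ℝ) ≤ σh + σ), ← abs_mul]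
      ring_nf
    rw [he]; exact hsq
  have h2 : d ≤ σh + σ := by
    rw [hd]; rcases abs_cases (σh - σ) with ⟨h, _⟩ | ⟨h, _⟩ <;> linarith
  -- key squared inequality
  have hkey : d ^ 2 * (σh ^ 2 + ε) ≤ 2 * ε ^ 2 := by
    rcases le_total (σh ^ 2) ε with h | h
    · have hdsq : d ^ 2 ≤ ε := by nlinarith
      nlinarith
    · have hds : d * σh ≤ ε := by nlinarith
      nlinarith [mul_nonneg hd0 hσh]
  rw [le_div_iff₀ hs]
  have := Real.sqrt_le_sqrt hkey
  calc d * Real.sqrt (σh ^ 2 + ε)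
      = Real.sqrt (d ^ 2 * (σh ^ 2 + ε)) := by
        rw [Real.sqrt_mul (sq_nonneg d), Real.sqrt_sq hd0]
    _ ≤ Real.sqrt (2 * ε ^ 2) := this
    _ = Real.sqrt 2 * ε := by
        rw [Real.sqrt_mul (by norm_num), Real.sqrt_sq hε.le]
end

section
/- Let m be a positive natural number satisfying m ≤ 1 + a·log(c·m²) for positive reals a, c with a·c ≥ 1 and c ≥ e. Then m ≤ 4a·log(2a) + 2a·log c + 2. -/
/-- inversion lemma, cf. Lemma 8 of Antos et al. 2010: if a positive
natural number `m` satisfies `m ≤ 1 + a·log(c·m²)` with `a > 0`, `c ≥ e` and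
`a·c ≥ 1`, then `m ≤ 4a·log(2a) + 2a·log c + 2`. -/
theorem inversion_lemma
    (m : ℕ) (hm : 1 ≤ m) (a c : ℝ) (ha : 0 < a) (hc : Real.exp 1 ≤ c)
    (hac : 1 ≤ a * c)
    (h : (m : ℝ) ≤ 1 + a * Real.log (c * (m : ℝ) ^ 2)) :
    (m : ℝ) ≤ 4 * a * Real.log (2 * a) + 2 * a * Real.log c + 2 := by
  have hm' : (1:ℝ) ≤ (m:ℝ) := by exact_mod_cast hm
  have hmpos : (0:ℝ) < (m:ℝ) := by linarith
  have hcpos : 0 < c := lt_of_lt_of_le (Real.exp_pos 1) hc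
  have hlog : Real.log (c * (m:ℝ) ^ 2) = Real.log c + 2 * Real.log m := by
    rw [Real.log_mul hcpos.ne' (by positivity), Real.log_pow]; push_cast; ring
  rw [hlog] at h
  have h1 : Real.log ((m:ℝ) / (4 * a)) ≤ (m:ℝ) / (4 * a) - 1 :=
    Real.log_le_sub_one_of_pos (by positivity)
  have h2 : Real.log ((m:ℝ) / (4 * a)) = Real.log m - Real.log (4 * a) :=
    Real.log_div hmpos.ne' (by positivity)
  have h3 : Real.log (4 * a) = Real.log 2 + Real.log (2 * a) := by
    rw [show (4:ℝ) * a = 2 * (2 * a) by ring,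
      Real.log_mul two_ne_zero (by positivity)]
  have hlog2 : Real.log 2 ≤ 1 := by
    have := Real.log_le_sub_one_of_pos (show (0:ℝ) < 2 by norm_num); linarith
  have hkey : Real.log m ≤ (m:ℝ) / (4 * a) - 1 + Real.log 2 + Real.log (2 * a) := by
    rw [h2, h3] at h1; linarith
  have hmul : 2 * a * Real.log m ≤
      2 * a * ((m:ℝ) / (4 * a) - 1 + Real.log 2 + Real.log (2 * a)) := by
    exact mul_le_mul_of_nonneg_left hkey (by positivity)
  have hdiv : 2 * a * ((m:ℝ) / (4 * a)) = (m:ℝ) / 2 := by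
    field_simp; ring
  nlinarith [hmul, hdiv, mul_le_mul_of_nonneg_left hlog2 (le_of_lt ha)]
end
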